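/- Let H be a Hilbert space and A, B closed subspaces. For any a ∈ A and b ∈ B, the inner product ⟨P_{A∩B}^⊥ a, P_{A∩B}^⊥ b⟩ equals the negative of the sum over k ≥ 0 of ⟨(P_A^⊥ P_B^⊥)^{k+1} a, b⟩. -/

import Mathlib

open scoped InnerProductSpace

/-- The orthogonal projection of `H` onto the closed subspace `K`, as a map `H →L[ℂ] H`. -/
noncomputable def projCLM {H : Type*} [NormedAddCommGroup H] [InnerProductSpace ℂ H]
    (K : Submodule ℂ H) [K.HasOrthogonalProjection] : H →L[ℂ] H :=
  K.subtypeL.comp K.orthogonalProjectionOnto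

/-!
Write `P`, `Q` for the projections onto `A`, `B` and `T = QPQ`. For `a ∈ A`, `b ∈ B` an identity
between idempotents gives `⟪((1 - P)(1 - Q))ᵏ⁺¹ a, b⟫ = ⟪Tᵏ⁺¹ Qa, b⟫ - ⟪Tᵏ Qa, b⟫`, so the series
telescopes. `T` is self-adjoint with `0 ≤ T ≤ 1`, hence `n ↦ ⟪Tⁿ x, x⟫` decreases; this makes
`Tⁿ x` Cauchy, with limit the projection of `x` onto the fixed space `A ⊓ B` (von Neumann), and by
polarization it makes the series absolutely summable. The sum is `⟪P_{A⊓B} a, b⟫ - ⟪a, b⟫`.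
-/

open Filter Topology RCLike

lemma summable_sub_succ_of_antitone {c : ℕ → ℝ} (hc : Antitone c) (hb : BddBelow (Set.range c)) :
    Summable fun k => c k - c (k + 1) := by
  refine ⟨c 0 - ⨅ k, c k, (hasSum_iff_tendsto_nat_of_nonneg (fun k => sub_nonneg.2 (hc k.le_succ))
    _).2 ?_⟩
  simpa only [Finset.sum_range_sub'] using (tendsto_atTop_ciInf hc hb).const_sub (c 0)

lemma hasSum_succ_sub_of_tendsto {G : Type*} [AddCommGroup G] [TopologicalSpace G]
    [IsTopologicalAddGroup G] [T2Space G] {f : ℕ → G} {L : G}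
    (hs : Summable fun k => f (k + 1) - f k) (hf : Tendsto f atTop (𝓝 L)) :
    HasSum (fun k => f (k + 1) - f k) (L - f 0) := by
  rw [hs.hasSum_iff_tendsto_nat]
  simpa only [Finset.sum_range_sub] using hf.sub_const (f 0)

lemma mul_pow_succ_mul_of_isIdempotentElem {R : Type*} [Ring R] {p q : R}
    (hp : IsIdempotentElem p) (hq : IsIdempotentElem q) (k : ℕ) :
    q * ((1 - p) * (1 - q)) ^ (k + 1) * p =
      (q * p * q) ^ (k + 1) * q * p - (q * p * q) ^ k * q * p := by
  have hpM : p * ((1 - p) * (1 - q)) = 0 := by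
    rw [← mul_assoc, mul_sub p 1 p, mul_one, hp.eq, sub_self, zero_mul]
  have hqM : q * ((1 - p) * (1 - q)) = q * p * q - q * p := by
    simp only [mul_sub, sub_mul, mul_one, one_mul, ← mul_assoc, hq.eq]; abel
  have hTq : q * p * q * q = q * p * q := by rw [mul_assoc, hq.eq]
  generalize (1 - p) * (1 - q) = M at hpM hqM ⊢
  generalize q * p * q = T at hqM hTq ⊢
  have hpow : ∀ k : ℕ, q * M ^ (k + 1) = T ^ k * (q * M) := by
    intro k
    induction k with
    | zero => simp
    | succ k ih =>
      calc q * M ^ (k + 2) = q * M * M ^ (k + 1) := by rw [pow_succ' M (k + 1), mul_assoc]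
        _ = T * q * M ^ (k + 1) := by
            rw [hqM, hTq, sub_mul, pow_succ' M k, mul_assoc q p, ← mul_assoc p, hpM, zero_mul,
              mul_zero, sub_zero]
        _ = T ^ (k + 1) * (q * M) := by rw [mul_assoc, ih, ← mul_assoc, ← pow_succ']
  rw [hpow, hqM, pow_succ, mul_assoc _ T q, hTq]
  simp only [mul_sub, sub_mul, mul_assoc, hp.eq]

namespace IsSelfAdjoint

variable {𝕜 E : Type*} [RCLike 𝕜] [NormedAddCommGroup E] [InnerProductSpace 𝕜 E] [CompleteSpace E]
  {T : E →L[𝕜] E}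

lemma inner_pow_apply_pow_apply (hT : IsSelfAdjoint T) (x : E) (n m : ℕ) :
    ⟪(T ^ n) x, (T ^ m) x⟫_𝕜 = ⟪(T ^ (n + m)) x, x⟫_𝕜 := by
  calc ⟪(T ^ n) x, (T ^ m) x⟫_𝕜 = ⟪(T ^ m) ((T ^ n) x), x⟫_𝕜 := ((hT.pow m).isSymmetric _ _).symm
    _ = ⟪(T ^ (n + m)) x, x⟫_𝕜 := by rw [add_comm, pow_add]; rfl

lemma re_inner_pow_two_mul_apply (hT : IsSelfAdjoint T) (x : E) (j : ℕ) :
    re ⟪(T ^ (2 * j)) x, x⟫_𝕜 = ‖(T ^ j) x‖ ^ 2 := by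
  rw [two_mul, ← hT.inner_pow_apply_pow_apply, inner_self_eq_norm_sq]

lemma re_inner_pow_two_mul_add_one_apply (hT : IsSelfAdjoint T) (x : E) (j : ℕ) :
    re ⟪(T ^ (2 * j + 1)) x, x⟫_𝕜 = re ⟪T ((T ^ j) x), (T ^ j) x⟫_𝕜 := by
  rw [show 2 * j + 1 = (j + 1) + j by ring, ← hT.inner_pow_apply_pow_apply, pow_succ']
  rfl

section Contraction

-- `hT₂` is the operator inequality `T² ≤ T`, i.e. `0 ≤ T ≤ 1` for self-adjoint `T`.
variable (hT : IsSelfAdjoint T) (hT₂ : ∀ x, ‖T x‖ ^ 2 ≤ re ⟪T x, x⟫_𝕜)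
include hT₂

omit [CompleteSpace E] in
lemma norm_apply_le_of_norm_sq_le_re_inner (x : E) : ‖T x‖ ≤ ‖x‖ := by
  have h := (hT₂ x).trans (re_inner_le_norm _ _)
  nlinarith [norm_nonneg (T x), norm_nonneg x]

include hT

lemma antitone_re_inner_pow_apply (x : E) : Antitone fun n => re ⟪(T ^ n) x, x⟫_𝕜 := by
  refine antitone_nat_of_succ_le fun n => ?_
  obtain ⟨j, rfl | rfl⟩ := Nat.even_or_odd' n
  · rw [hT.re_inner_pow_two_mul_add_one_apply, hT.re_inner_pow_two_mul_apply]
    calc re ⟪T ((T ^ j) x), (T ^ j) x⟫_𝕜 ≤ ‖T ((T ^ j) x)‖ * ‖(T ^ j) x‖ := re_inner_le_norm _ _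
      _ ≤ ‖(T ^ j) x‖ ^ 2 := by
        rw [sq]; gcongr; exact norm_apply_le_of_norm_sq_le_re_inner hT₂ _
  · rw [show 2 * j + 1 + 1 = 2 * (j + 1) by ring, hT.re_inner_pow_two_mul_add_one_apply,
      hT.re_inner_pow_two_mul_apply, pow_succ' T j]
    exact hT₂ _

lemma bddBelow_re_inner_pow_apply (x : E) :
    BddBelow (Set.range fun n => re ⟪(T ^ n) x, x⟫_𝕜) := by
  refine ⟨0, ?_⟩
  rintro _ ⟨n, rfl⟩
  calc (0 : ℝ) ≤ ‖(T ^ n) x‖ ^ 2 := by positivity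
    _ = re ⟪(T ^ (2 * n)) x, x⟫_𝕜 := (hT.re_inner_pow_two_mul_apply x n).symm
    _ ≤ re ⟪(T ^ n) x, x⟫_𝕜 := antitone_re_inner_pow_apply hT hT₂ x (by omega)

lemma cauchySeq_pow_apply (x : E) : CauchySeq fun n => (T ^ n) x := by
  set c : ℕ → ℝ := fun n => re ⟪(T ^ n) x, x⟫_𝕜
  have hc := antitone_re_inner_pow_apply hT hT₂ x
  have hcb := bddBelow_re_inner_pow_apply hT hT₂ x
  have hL : ∀ n, ⨅ k, c k ≤ c n := fun n => ciInf_le hcb n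
  have hdist : ∀ n m, ‖(T ^ n) x - (T ^ m) x‖ ^ 2 ≤ (c n - ⨅ k, c k) + (c m - ⨅ k, c k) := by
    intro n m
    have hnm := hT.inner_pow_apply_pow_apply x n m
    rw [norm_sub_sq (𝕜 := 𝕜), hnm, ← hT.re_inner_pow_two_mul_apply,
      ← hT.re_inner_pow_two_mul_apply]
    have := hc (show n ≤ 2 * n by omega)
    have := hc (show m ≤ 2 * m by omega)
    linarith [hL (n + m)]
  rw [Metric.cauchySeq_iff]
  intro ε hε
  obtain ⟨N, hN⟩ :=
    (Metric.tendsto_atTop.1 (tendsto_atTop_ciInf hc hcb)) (ε ^ 2 / 2) (by positivity)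
  refine ⟨N, fun m hm n hn => ?_⟩
  have hm' := hN m hm
  have hn' := hN n hn
  rw [Real.dist_eq, abs_of_nonneg (sub_nonneg.2 (hL _))] at hm' hn'
  rw [dist_eq_norm]
  exact lt_of_pow_lt_pow_left₀ 2 hε.le ((hdist m n).trans_lt (by linarith))

lemma tendsto_pow_apply_starProjection {K : Submodule 𝕜 E} [K.HasOrthogonalProjection]
    (hK : ∀ y, T y = y ↔ y ∈ K) (x : E) :
    Tendsto (fun n => (T ^ n) x) atTop (𝓝 (K.starProjection x)) := by
  obtain ⟨z, hz⟩ := cauchySeq_tendsto_of_complete (cauchySeq_pow_apply hT hT₂ x)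
  have hTz : T z = z := by
    refine tendsto_nhds_unique ((T.continuous.tendsto z).comp hz) ?_
    refine (hz.comp (tendsto_add_atTop_nat 1)).congr fun n => ?_
    simp only [Function.comp_apply, pow_succ']
    rfl
  suffices K.starProjection x = z by rwa [this]
  refine Submodule.eq_starProjection_of_mem_of_inner_eq_zero ((hK z).1 hTz) fun w hw => ?_
  have hfix : ∀ n, (T ^ n) w = w := by
    intro n
    induction n with
    | zero => rfl
    | succ n ih => rw [pow_succ', mul_apply_eq_comp, ih, (hK w).2 hw]
  have hconst : ∀ n, ⟪(T ^ n) x, w⟫_𝕜 = ⟪x, w⟫_𝕜 := fun n =>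
    ((hT.pow n).isSymmetric x w).trans (congrArg _ (hfix n))
  have hzw : ⟪z, w⟫_𝕜 = ⟪x, w⟫_𝕜 :=
    tendsto_nhds_unique (hz.inner tendsto_const_nhds)
      (tendsto_const_nhds.congr fun n => (hconst n).symm)
  rw [inner_sub_left, hzw, sub_self]

end Contraction

section Complex

variable {H : Type*} [NormedAddCommGroup H] [InnerProductSpace ℂ H] [CompleteSpace H]
  {T : H →L[ℂ] H} (hT : IsSelfAdjoint T) (hT₂ : ∀ x, ‖T x‖ ^ 2 ≤ re ⟪T x, x⟫_ℂ)
include hT hT₂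

lemma summable_inner_pow_succ_apply_self_sub (x : H) :
    Summable fun k => ⟪(T ^ (k + 1)) x, x⟫_ℂ - ⟪(T ^ k) x, x⟫_ℂ := by
  have hreal : ∀ k, ⟪(T ^ k) x, x⟫_ℂ = (re ⟪(T ^ k) x, x⟫_ℂ : ℂ) := fun k =>
    ((hT.pow k).isSymmetric.coe_re_inner_apply_self x).symm
  have hs := (summable_sub_succ_of_antitone (antitone_re_inner_pow_apply hT hT₂ x)
    (bddBelow_re_inner_pow_apply hT hT₂ x)).neg
  rw [← Complex.summable_ofReal] at hs
  refine hs.congr fun k => ?_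
  rw [Complex.ofReal_neg, Complex.ofReal_sub, neg_sub, ← hreal, ← hreal]

/-- By polarization, the off-diagonal differences are combinations of diagonal ones. -/
lemma summable_inner_pow_succ_apply_sub (x y : H) :
    Summable fun k => ⟪(T ^ (k + 1)) x, y⟫_ℂ - ⟪(T ^ k) x, y⟫_ℂ := by
  have hpol : ∀ k, ⟪(T ^ (k + 1)) x, y⟫_ℂ - ⟪(T ^ k) x, y⟫_ℂ = _ := fun k =>
    (inner_sub_left _ _ _).symm.trans
      (inner_map_polarization' ((T ^ (k + 1) - T ^ k : H →L[ℂ] H) : H →ₗ[ℂ] H) x y)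
  have hdiag : ∀ k w, ⟪((T ^ (k + 1) - T ^ k : H →L[ℂ] H) : H →ₗ[ℂ] H) w, w⟫_ℂ =
      ⟪(T ^ (k + 1)) w, w⟫_ℂ - ⟪(T ^ k) w, w⟫_ℂ := fun _ _ => inner_sub_left _ _ _
  simp_rw [hpol, hdiag]
  have hs := summable_inner_pow_succ_apply_self_sub hT hT₂
  exact ((((hs _).sub (hs _)).sub ((hs _).mul_left _)).add ((hs _).mul_left _)).div_const _

end Complex

end IsSelfAdjoint

namespace Submodule

variable {𝕜 E : Type*} [RCLike 𝕜] [NormedAddCommGroup E] [InnerProductSpace 𝕜 E]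

lemma inner_one_sub_starProjection_apply (K : Submodule 𝕜 E) [K.HasOrthogonalProjection]
    (x y : E) :
    ⟪(1 - K.starProjection) x, (1 - K.starProjection) y⟫_𝕜 =
      ⟪x, y⟫_𝕜 - ⟪K.starProjection x, y⟫_𝕜 := by
  simp only [sub_apply, one_apply_eq_self]
  rw [inner_sub_right, starProjection_inner_eq_zero x _ (K.starProjection_apply_mem y), sub_zero,
    inner_sub_left]

variable (U V : Submodule 𝕜 E) [U.HasOrthogonalProjection] [V.HasOrthogonalProjection]

lemma norm_sq_starProjection_mul_mul_apply_le (x : E) :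
    ‖(V.starProjection * U.starProjection * V.starProjection) x‖ ^ 2 ≤
      re ⟪(V.starProjection * U.starProjection * V.starProjection) x, x⟫_𝕜 := by
  simp only [mul_apply_eq_comp]
  rw [inner_starProjection_left_eq_right, re_inner_starProjection_eq_normSq]
  exact pow_le_pow_left₀ (norm_nonneg _) (V.norm_starProjection_apply_le _) 2

lemma starProjection_mul_mul_apply_eq_self_iff (y : E) :
    (V.starProjection * U.starProjection * V.starProjection) y = y ↔ y ∈ U ⊓ V := by
  simp only [mul_apply_eq_comp]
  refine ⟨fun hy => ?_, fun hy => ?_⟩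
  · -- `‖y‖ = ‖QPQy‖ ≤ ‖PQy‖ ≤ ‖Qy‖ ≤ ‖y‖` forces equality at every step
    have h₁ := V.norm_starProjection_apply_le (U.starProjection (V.starProjection y))
    have h₂ := U.norm_starProjection_apply_le (V.starProjection y)
    have h₃ := V.norm_starProjection_apply_le y
    rw [hy] at h₁
    have hyV : y ∈ V := (V.mem_iff_norm_starProjection y).2 (by linarith)
    rw [starProjection_eq_self_iff.2 hyV] at h₁ h₂
    exact ⟨(U.mem_iff_norm_starProjection y).2 (by linarith), hyV⟩
  · rw [starProjection_eq_self_iff.2 hy.2, starProjection_eq_self_iff.2 hy.1,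
      starProjection_eq_self_iff.2 hy.2]

lemma isSelfAdjoint_starProjection_mul_mul [CompleteSpace E] :
    IsSelfAdjoint (V.starProjection * U.starProjection * V.starProjection) := by
  simpa only [(isSelfAdjoint_starProjection V).star_eq] using
    (isSelfAdjoint_starProjection U).conjugate V.starProjection

lemma inner_one_sub_mul_one_sub_pow_succ_apply {a b : E} (ha : a ∈ U) (hb : b ∈ V) (k : ℕ) :
    ⟪(((1 - U.starProjection) * (1 - V.starProjection)) ^ (k + 1)) a, b⟫_𝕜 =
      ⟪((V.starProjection * U.starProjection * V.starProjection) ^ (k + 1)) (V.starProjection a),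
          b⟫_𝕜 -
        ⟪((V.starProjection * U.starProjection * V.starProjection) ^ k) (V.starProjection a),
          b⟫_𝕜 := by
  have key := congr(⟪$(mul_pow_succ_mul_of_isIdempotentElem U.isIdempotentElem_starProjection
    V.isIdempotentElem_starProjection k) a, b⟫_𝕜)
  simp only [mul_apply_eq_comp, sub_apply, inner_sub_left, starProjection_eq_self_iff.2 ha] at key
  rw [← key, inner_starProjection_left_eq_right, starProjection_eq_self_iff.2 hb]

end Submodule

lemma projCLM_eq_starProjection {H : Type*} [NormedAddCommGroup H] [InnerProductSpace ℂ H]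
    (K : Submodule ℂ H) [K.HasOrthogonalProjection] : projCLM K = K.starProjection :=
  rfl

theorem alternating_projection_inner_cross_rep_general {H : Type*} [NormedAddCommGroup H]
    [InnerProductSpace ℂ H] [CompleteSpace H] (A B : Submodule ℂ H)
    [CompleteSpace A] [CompleteSpace B] [CompleteSpace ↥(A ⊓ B)]
    (a b : H) (ha : a ∈ A) (hb : b ∈ B) :
    ⟪(1 - projCLM (A ⊓ B)) a, (1 - projCLM (A ⊓ B)) b⟫_ℂ =
      - ∑' k : ℕ,
          ⟪(((1 - projCLM A) * (1 - projCLM B)) ^ (k + 1)) a, b⟫_ℂ := by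
  set Q := B.starProjection
  set T := Q * A.starProjection * Q
  have hT : IsSelfAdjoint T := A.isSelfAdjoint_starProjection_mul_mul B
  have hT₂ := A.norm_sq_starProjection_mul_mul_apply_le B
  have hlim := (hT.tendsto_pow_apply_starProjection hT₂
    (A.starProjection_mul_mul_apply_eq_self_iff B) (Q a)).inner (𝕜 := ℂ)
      (tendsto_const_nhds (x := b))
  have hsum := hasSum_succ_sub_of_tendsto (f := fun n => ⟪(T ^ n) (Q a), b⟫_ℂ)
    (hT.summable_inner_pow_succ_apply_sub hT₂ _ b) hlim
  have hRQ : (A ⊓ B).starProjection (Q a) = (A ⊓ B).starProjection a :=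
    congr($(Submodule.starProjection_comp_starProjection_of_le (inf_le_right : A ⊓ B ≤ B)) a)
  have hQab : ⟪Q a, b⟫_ℂ = ⟪a, b⟫_ℂ := by
    rw [Submodule.inner_starProjection_left_eq_right, Submodule.starProjection_eq_self_iff.2 hb]
  rw [hRQ, pow_zero, one_apply_eq_self, hQab] at hsum
  simp only [projCLM_eq_starProjection, Submodule.inner_one_sub_starProjection_apply,
    A.inner_one_sub_mul_one_sub_pow_succ_apply B ha hb]
  rw [hsum.tsum_eq, neg_sub]

theorem alternating_projection_inner_cross_rep {H : Type*} [NormedAddCommGroup H]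
    [InnerProductSpace ℂ H] [CompleteSpace H] (A B : Submodule ℂ H)
    (hA : IsClosed (A : Set H)) (hB : IsClosed (B : Set H))
    [CompleteSpace A] [CompleteSpace B] [CompleteSpace ↥(A ⊓ B)]
    (a b : H) (ha : a ∈ A) (hb : b ∈ B) :
    ⟪(1 - projCLM (A ⊓ B)) a, (1 - projCLM (A ⊓ B)) b⟫_ℂ =
      - ∑' k : ℕ,
          ⟪(((1 - projCLM A) * (1 - projCLM B)) ^ (k + 1)) a, b⟫_ℂ :=
  alternating_projection_inner_cross_rep_general A B a b ha hb
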